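/- For every real number α ≥ 1 and every real number x with 0 ≤ x ≤ 1/α, it holds that x ≤ (1 + 1/α)·log(1 + x), where log denotes the natural logarithm. -/

import Mathlib

/-!
Since `log (1 + x) ≥ x / (1 + x)`, it suffices that `x * (1 + x) ≤ (1 + c) * x`, which for
`x ≥ 0` is exactly `x ≤ c`; here `c = 1/α`.
-/

open Real

lemma div_one_add_le_log_one_add {x : ℝ} (hx : -1 < x) : x / (1 + x) ≤ log (1 + x) := by
  have hpos : 0 < 1 + x := by linarith
  calc x / (1 + x) = 1 - (1 + x)⁻¹ := by field_simp; ring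
    _ ≤ log (1 + x) := one_sub_inv_le_log_of_pos hpos

lemma le_one_add_mul_log_one_add {x c : ℝ} (hx : 0 ≤ x) (hxc : x ≤ c) :
    x ≤ (1 + c) * log (1 + x) := by
  have hpos : 0 < 1 + x := by linarith
  calc x ≤ (1 + c) * (x / (1 + x)) := by
        rw [mul_div_assoc', le_div_iff₀ hpos]
        nlinarith
    _ ≤ (1 + c) * log (1 + x) := by
        gcongr
        · linarith
        · exact div_one_add_le_log_one_add (by linarith)

theorem stmt_15_general (α : ℝ) (x : ℝ) (hx0 : 0 ≤ x) (hx1 : x ≤ 1 / α) :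
    x ≤ (1 + 1 / α) * Real.log (1 + x) :=
  le_one_add_mul_log_one_add hx0 hx1

/-- For every real `α ≥ 1` and every real `x` with `0 ≤ x ≤ 1/α`,
`x ≤ (1 + 1/α) · log (1 + x)`. -/
theorem stmt_15 (α : ℝ) (hα : 1 ≤ α) (x : ℝ) (hx0 : 0 ≤ x) (hx1 : x ≤ 1 / α) :
    x ≤ (1 + 1 / α) * Real.log (1 + x) :=
  stmt_15_general α x hx0 hx1
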